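/- arXiv:1708.05255 — 3 statements merged into one kernel-verified Lean document; each statement's English description precedes it below -/
import Mathlib

section
/- For every non-negative integer n₁, if there exists a morphism (t,c)→(t′,c′) in the subcategory Seg(Ω|n₁) of quasi-homologous segments (morphisms whose first component f₁ is the identity on [n₁]), then it is the unique morphism of type (t,c)→(t′,c′) in the whole category Seg(Ω). Consequently Seg(Ω|n₁) is a pre-order category. -/
/-- A segment over a pre-ordered set `Ω` of type `[n₁] ⊸ [n₀]`: an order-preserving
surjection `t : [n₁] → [n₀]` together with a coloring `c : [n₀] → Ω`. -/
structure Seg (Ω : Type) [Preorder Ω] (n₁ n₀ : ℕ) where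
  t : Fin n₁ → Fin n₀
  t_mono : Monotone t
  t_surj : Function.Surjective t
  c : Fin n₀ → Ω

/-- A morphism of segments: an order-preserving injection `f₁`, an order-preserving
map `f₀`, such that `f₀ ∘ t = t' ∘ f₁` and `c' ∘ f₀ ⪯ c` pointwise. -/
structure SegHom {Ω : Type} [Preorder Ω] {n₁ n₀ m₁ m₀ : ℕ}
    (A : Seg Ω n₁ n₀) (B : Seg Ω m₁ m₀) where
  f₁ : Fin n₁ → Fin m₁
  f₀ : Fin n₀ → Fin m₀
  f₁_mono : Monotone f₁
  f₁_inj : Function.Injective f₁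
  f₀_mono : Monotone f₀
  comm : ∀ i, f₀ (A.t i) = B.t (f₁ i)
  color : ∀ i, B.c (f₀ i) ≤ A.c i

/-- Since `A.t` is surjective, `f₀` is determined by `f₁` through `f₀ ∘ A.t = B.t ∘ f₁`. -/
theorem SegHom.eq_of_f₁_eq {Ω : Type} [Preorder Ω] {n₁ n₀ m₁ m₀ : ℕ}
    {A : Seg Ω n₁ n₀} {B : Seg Ω m₁ m₀} {f g : SegHom A B} (h₁ : f.f₁ = g.f₁) : f = g := by
  have h₀ : f.f₀ = g.f₀ := by
    funext i
    obtain ⟨j, rfl⟩ := A.t_surj i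
    rw [f.comm, g.comm, h₁]
  cases f
  cases g
  congr

theorem SegHom.f₁_eq_id {Ω : Type} [Preorder Ω] {n₁ n₀ m₀ : ℕ}
    {A : Seg Ω n₁ n₀} {B : Seg Ω n₁ m₀} (f : SegHom A B) : f.f₁ = id :=
  (f.f₁_mono.strictMono_of_injective f.f₁_inj).eq_id

theorem quasi_homologous_unique_general {Ω : Type} [Preorder Ω] {n₁ n₀ m₀ : ℕ}
    (A : Seg Ω n₁ n₀) (B : Seg Ω n₁ m₀)
    (h : SegHom A B) (g : SegHom A B) : g = h :=
  SegHom.eq_of_f₁_eq (by rw [g.f₁_eq_id, h.f₁_eq_id])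

/-- if there is a morphism of quasi-homologous segments
(same domain `[n₁]`, first component the identity), it is the unique morphism
with that source and target in the whole category `Seg(Ω)`; in particular
`Seg(Ω|n₁)` is a pre-order category. -/
theorem quasi_homologous_unique {Ω : Type} [Preorder Ω] {n₁ n₀ m₀ : ℕ}
    (A : Seg Ω n₁ n₀) (B : Seg Ω n₁ m₀)
    (h : SegHom A B) (hid : h.f₁ = id) (g : SegHom A B) : g = h :=
  quasi_homologous_unique_general A B h g
end

section
/- Let (Ω,D) be a b-distributive chromology, i.e., for every cone ρ:Δ_A(τ)⇒θ in D, the canonical map colim_A Tr_b∘θ → Tr_b(τ) is surjective. Then the functor E_b^ε: Seg(Ω)→Set sends every cone in D to a cone whose limit adjoint E_b^ε(τ) → lim_A E_b^ε∘θ is injective (i.e., E_b^ε is a W^inj-pedigrad). -/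
/-- The `b`-truncation of a segment: `Tr_b(t,c) = { i ∈ [n₁] | b ⪯ c(t(i)) }`. -/
def TrSet {Ω : Type} [Preorder Ω] (b : Ω) {n₁ n₀ : ℕ} (A : Seg Ω n₁ n₀) : Set (Fin n₁) :=
  {i | b ≤ A.c (A.t i)}

namespace Set

variable {α ι : Type*} {S : Set α} {T : ι → Set α}

lemma sigma_inclusion_surjective_of_subset_iUnion (hT : ∀ i, T i ⊆ S) (hS : S ⊆ ⋃ i, T i) :
    Function.Surjective (fun p : Σ i, T i => (⟨p.2, hT p.1 p.2.2⟩ : S)) := by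
  rintro ⟨x, hx⟩
  obtain ⟨i, hi⟩ := mem_iUnion.1 (hS hx)
  exact ⟨⟨i, x, hi⟩, rfl⟩

/-- Maps out of `S` are determined by their restrictions to a cover of `S`: `Set(−, E)` turns
the surjection `∐ i, T i → S` into an injection, and `Set(∐ i, T i, E) ≃ ∏ i, Set(T i, E)`. -/
lemma restrict_family_injective_of_subset_iUnion (E : Type*) (hT : ∀ i, T i ⊆ S)
    (hS : S ⊆ ⋃ i, T i) :
    Function.Injective (fun (ψ : S → E) (i : ι) (y : T i) => ψ ⟨y, hT i y.2⟩) :=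
  (Equiv.piCurry fun i (_ : T i) => E).injective.comp
    (sigma_inclusion_surjective_of_subset_iUnion hT hS).injective_comp_right

end Set

/-- `hdist` is the `b`-distributivity of the cone `Δ_A(τ) ⇒ θ`: `Tr_b(τ) = ⋃_a Tr_b(θ(a))`. -/
theorem Ebε_pedigrad_inj_general {Ω : Type} [Preorder Ω] (b : Ω) (E : Type)
    (A : Type) {n n₀ : ℕ} (τ : Seg Ω n n₀)
    (m : A → ℕ) (θ : ∀ a : A, Seg Ω n (m a))
    (hlegs : ∀ a, TrSet b (θ a) ⊆ TrSet b τ)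
    (hdist : ∀ i ∈ TrSet b τ, ∃ a, i ∈ TrSet b (θ a)) :
    Function.Injective
      (fun (ψ : {i // i ∈ TrSet b τ} → E) (a : A) (j : {i // i ∈ TrSet b (θ a)}) =>
        ψ ⟨j.1, hlegs a j.2⟩) :=
  Set.restrict_family_injective_of_subset_iUnion E hlegs fun i hi => Set.mem_iUnion.2 (hdist i hi)

/-- let `(Ω,D)` be a `b`-distributive chromology.  For a cone
`ρ : Δ_A(τ) ⇒ θ` in `Seg(Ω|n)` (over a small index category `A`, which — `Seg(Ω|n)`
being a pre-order category — is given by a preorder on `A`, legs `τ → θ(a)` and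
connecting morphisms `θ(a) → θ(a′)` for `a ≤ a′`, all with identity first
component), `b`-distributivity means the canonical map `colim_A Tr_b∘θ → Tr_b(τ)`
is surjective, i.e. `Tr_b(τ) = ⋃_a Tr_b(θ(a))`.  Then, `E_b^ε` being identified with
`Set(Tr_b(−),E)` on `Seg(Ω|n)`, the limit adjoint
`E_b^ε(τ) → lim_A E_b^ε∘θ` is injective: the restriction map
`(Tr_b(τ) → E) → ∏_a (Tr_b(θ(a)) → E)` is injective. -/
theorem Ebε_pedigrad_inj {Ω : Type} [Preorder Ω] (b : Ω) (E : Type)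
    (A : Type) [Preorder A] {n n₀ : ℕ} (τ : Seg Ω n n₀)
    (m : A → ℕ) (θ : ∀ a : A, Seg Ω n (m a))
    (legs : ∀ a, SegHom τ (θ a)) (hlegs_id : ∀ a, (legs a).f₁ = id)
    (diag : ∀ a a', a ≤ a' → ∃ h : SegHom (θ a) (θ a'), h.f₁ = id)
    (hlegs : ∀ a, TrSet b (θ a) ⊆ TrSet b τ)
    (hdist : ∀ i ∈ TrSet b τ, ∃ a, i ∈ TrSet b (θ a)) :
    Function.Injective
      (fun (ψ : {i // i ∈ TrSet b τ} → E) (a : A) (j : {i // i ∈ TrSet b (θ a)}) =>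
        ψ ⟨j.1, hlegs a j.2⟩) :=
  Ebε_pedigrad_inj_general b E A τ m θ hlegs hdist
end

section
/- Let S be a Cartesian wide span in Set (the canonical map S → ∏_i S_i is a bijection). Then every equivalence class of the recombination congruence G(S) (the pullback of π_S:F(S)→∏_i F(S_i) along itself) admits a maximum for the support-inclusion partial order on F(S); the maximum of the class of x corresponds, under F(S) ≅ F(∏_i S_i), to the element represented by the subset Supp(x₁)×⋯×Supp(x_k) where (x₁,…,x_k) = π_S(x). -/
/-! Taking marginals `x ↦ (i ↦ f i '' x)` is left adjoint to taking recombinations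
`t ↦ {s | ∀ i, f i s ∈ t i}`, so `u (l x)` is the greatest element of the fibre of `l`
through `x`.  When the span is Cartesian, the recombinations of `t` are in bijection with
the box `∏ᵢ tᵢ`. -/

theorem GaloisConnection.isGreatest_fiber {α β : Type*} [Preorder α] [PartialOrder β]
    {l : α → β} {u : β → α} (gc : GaloisConnection l u) (a : α) :
    IsGreatest {b | l b = l a} (u (l a)) :=
  ⟨gc.l_u_l_eq_l a, fun b hb => hb ▸ gc.le_u_l b⟩

section Recombination

variable {ι S : Type*} {α : ι → Type*} [∀ i, DecidableEq (α i)] (f : ∀ i, S → α i)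

def marginals (x : Finset S) (i : ι) : Finset (α i) :=
  x.image (f i)

variable [Fintype ι] [DecidableEq ι] {f}

noncomputable def recombinations (hf : (fun s i => f i s).Injective) (t : ∀ i, Finset (α i)) :
    Finset S :=
  (Fintype.piFinset t).preimage (fun s i => f i s) hf.injOn

theorem gc_marginals_recombinations (hf : (fun s i => f i s).Injective) :
    GaloisConnection (marginals f) (recombinations hf) := by
  intro x t
  simp only [Pi.le_def, marginals, Finset.image_subset_iff]
  simp only [recombinations, Finset.subset_iff, Finset.mem_preimage, Fintype.mem_piFinset]
  exact forall_comm.trans (forall_congr' fun _ => forall_comm)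

theorem image_recombinations (hf : (fun s i => f i s).Bijective) (t : ∀ i, Finset (α i)) :
    (recombinations hf.1 t).image (fun s i => f i s) = Fintype.piFinset t :=
  Finset.image_preimage_of_bijective _ hf

end Recombination

theorem haplotype_maximum_general
    (k : ℕ) (S : Type) (Si : Fin k → Type) [∀ i, DecidableEq (Si i)]
    (f : ∀ i, S → Si i)
    (hcart : Function.Bijective (fun s : S => (fun i => f i s : ∀ i, Si i))) :
    ∀ x : Finset S, ∃ M : Finset S,
      (∀ i, M.image (f i) = x.image (f i)) ∧
      (∀ y : Finset S, (∀ i, y.image (f i) = x.image (f i)) → y ⊆ M) ∧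
      M.image (fun s => (fun i => f i s : ∀ i, Si i)) =
        Fintype.piFinset (fun i => x.image (f i)) := by
  intro x
  obtain ⟨hfiber, hmax⟩ := (gc_marginals_recombinations hcart.1).isGreatest_fiber x
  exact ⟨recombinations hcart.1 (marginals f x), congrFun hfiber,
    fun y hy => hmax (funext hy), image_recombinations hcart _⟩

/-- for a Cartesian wide span, every equivalence class of the
recombination congruence `G(S)` admits a maximum `M` for the support-inclusion
partial order, and `M` corresponds under `F(S) ≅ F(∏ᵢ Sᵢ)` to the subset
`Supp(x₁) × ⋯ × Supp(x_k)` where `(x₁,…,x_k) = π_S(x)`. -/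
theorem haplotype_maximum
    (k : ℕ) (S : Type) [DecidableEq S] (Si : Fin k → Type) [∀ i, DecidableEq (Si i)]
    (f : ∀ i, S → Si i)
    (hcart : Function.Bijective (fun s : S => (fun i => f i s : ∀ i, Si i))) :
    ∀ x : Finset S, ∃ M : Finset S,
      (∀ i, M.image (f i) = x.image (f i)) ∧
      (∀ y : Finset S, (∀ i, y.image (f i) = x.image (f i)) → y ⊆ M) ∧
      M.image (fun s => (fun i => f i s : ∀ i, Si i)) =
        Fintype.piFinset (fun i => x.image (f i)) :=
  haplotype_maximum_general k S Si f hcart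
end
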